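/- Fix δ > 0 and ρ > 0, and let a ≥ 0. Then there exists a unique pair (τ², γ) with τ² ≥ 1 and γ > 0 satisfying the state-evolution fixed-point equations τ² = 1 + δ⁻¹·E[η_a(τZ; γ)²] and ρ = γ·(1 − δ⁻¹·E[η_a'(τZ; γ)]), where Z is a standard real Gaussian random variable. -/

import Mathlib

noncomputable section
open MeasureTheory ProbabilityTheory Filter
open scoped ENNReal NNReal

/-- The standard real Gaussian measure `N(0,1)`. -/
def stdGaussian : Measure ℝ := gaussianReal 0 1

/-- The denoiser `η_a(x; γ) = P_{[-a,a]}(x/(1+γ))`. -/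
def eta (a γ x : ℝ) : ℝ := max (-a) (min a (x / (1 + γ)))

/-- The derivative of the denoiser in `x` (defined except at `|x| = a(1+γ)`). -/
def eta' (a γ x : ℝ) : ℝ := if |x| < a * (1 + γ) then 1 / (1 + γ) else 0

/-- `(τ², γ)` solves the state-evolution fixed-point equations for parameters `(δ, ρ, a)`:
`τ² = 1 + δ⁻¹ E[η_a(τZ; γ)²]` and `ρ = γ (1 − δ⁻¹ E[η_a'(τZ; γ)])`, with `τ² ≥ 1, γ > 0`. -/
def IsSEFixedPoint (δ ρ a : ℝ) (p : ℝ × ℝ) : Prop :=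
  1 ≤ p.1 ∧ 0 < p.2 ∧
    p.1 = 1 + δ⁻¹ * ∫ z, (eta a p.2 (Real.sqrt p.1 * z)) ^ 2 ∂stdGaussian ∧
    ρ = p.2 * (1 - δ⁻¹ * ∫ z, eta' a p.2 (Real.sqrt p.1 * z) ∂stdGaussian)

/-!
Measure the threshold in units of `τ = √τ²`: put `b = a (1 + γ) / τ`. Then
`η_a(τZ; γ)² = (τ / (1 + γ))² min(b², Z²)` and `η_a'(τZ; γ) = 1_{|Z| < b} / (1 + γ)`, so the
first equation reads `(1 + γ)² = b² / a² + δ⁻¹ E[min(b², Z²)]`, which fixes `1 + γ = u(b)` and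
`τ = a u(b) / b`, and the second reads `ρ = F(b) := (u - 1)(u - δ⁻¹ P(|Z| < b)) / u`. Fixed
points therefore correspond to solutions of `F(b) = ρ` with `u(b) > 1`. `F` vanishes where
`u = 1` and exceeds `ρ` for large `b`, so a solution exists by the intermediate value theorem;
and `F' > 0` wherever `F > 0`, so `F` crosses the level `ρ > 0` only once. For `a = 0` both
denoisers vanish and `(1, ρ)` is the only solution.
-/

open Real Set Topology

lemma strictMonoOn_Icc_of_hasDerivAt_pos_of_lt {f : ℝ → ℝ} {x y c : ℝ}
    (hcont : ContinuousOn f (Icc x y))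
    (hderiv : ∀ z ∈ Ico x y, c < f z → ∃ f', HasDerivAt f f' z ∧ 0 < f') (hx : c < f x) :
    StrictMonoOn f (Icc x y) := by
  have hge : Icc x y ⊆ {z | f x ≤ f z} := by
    refine IsClosed.Icc_subset_of_forall_mem_nhdsWithin ?_ (le_refl (f x)) ?_
    · rw [inter_comm]
      exact hcont.preimage_isClosed_of_isClosed isClosed_Icc isClosed_Ici
    · rintro z ⟨hz, hzI⟩
      obtain ⟨f', hf, hf'⟩ := hderiv z hzI (hx.trans_le hz)
      have hslope : ∀ᶠ w in 𝓝[>] z, 0 < slope f z w :=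
        ((hasDerivAt_iff_tendsto_slope_left_right.1 hf).2).eventually (lt_mem_nhds hf')
      filter_upwards [hslope, self_mem_nhdsWithin] with w hw hzw
      rw [slope_def_field, div_pos_iff_of_pos_right (sub_pos.2 hzw), sub_pos] at hw
      exact hz.trans hw.le
  refine strictMonoOn_of_deriv_pos (convex_Icc x y) hcont fun z hz => ?_
  rw [interior_Icc] at hz
  obtain ⟨f', hf, hf'⟩ :=
    hderiv z (Ioo_subset_Ico_self hz) (hx.trans_le (hge (Ioo_subset_Icc_self hz)))
  rwa [hf.deriv]

local notation "φ" => gaussianPDFReal 0 1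

lemma gaussianPDFReal_zero_one : φ = fun x => (√(2 * π))⁻¹ * exp (-x ^ 2 / 2) := by
  ext x
  simp [gaussianPDFReal]

lemma gaussianPDFReal_zero_one_neg (x : ℝ) : φ (-x) = φ x := by
  simp [gaussianPDFReal_zero_one]

lemma continuous_gaussianPDFReal_zero_one : Continuous φ := by
  rw [gaussianPDFReal_zero_one]
  fun_prop

lemma hasDerivAt_gaussianPDFReal_zero_one (x : ℝ) : HasDerivAt φ (-x * φ x) x := by
  have h : HasDerivAt (fun y : ℝ => -y ^ 2 / 2) (-x) x := by
    simpa [neg_div] using ((hasDerivAt_pow 2 x).neg).div_const 2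
  rw [gaussianPDFReal_zero_one]
  exact (h.exp.const_mul _).congr_deriv (by ring)

def centralProb (b : ℝ) : ℝ := ∫ x in -b..b, φ x

/-- `∫_{-b}^{b} x² φ(x) dx`, in the closed form given by integration by parts. -/
def truncSecondMoment (b : ℝ) : ℝ := centralProb b - 2 * b * φ b

/-- `E[min(b², Z²)]` for `Z ∼ N(0,1)`. -/
def clipSecondMoment (b : ℝ) : ℝ := truncSecondMoment b + b ^ 2 * (1 - centralProb b)

lemma hasDerivAt_centralProb (b : ℝ) : HasDerivAt centralProb (2 * φ b) b := by
  have hF : ∀ y, HasDerivAt (fun u => ∫ x in (0 : ℝ)..u, φ x) (φ y) y := fun y =>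
    intervalIntegral.integral_hasDerivAt_right
      (continuous_gaussianPDFReal_zero_one.intervalIntegrable _ _)
      (continuous_gaussianPDFReal_zero_one.stronglyMeasurableAtFilter _ _)
      continuous_gaussianPDFReal_zero_one.continuousAt
  have h : HasDerivAt (fun b => (∫ x in (0 : ℝ)..b, φ x) - ∫ x in (0 : ℝ)..(-b), φ x)
      (φ b - φ (-b) * -1) b := (hF b).sub ((hF (-b)).comp b (hasDerivAt_neg b))
  have hq : centralProb = fun b => (∫ x in (0 : ℝ)..b, φ x) - ∫ x in (0 : ℝ)..(-b), φ x := by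
    ext b
    exact (intervalIntegral.integral_interval_sub_left
      (continuous_gaussianPDFReal_zero_one.intervalIntegrable _ _)
      (continuous_gaussianPDFReal_zero_one.intervalIntegrable _ _)).symm
  rw [hq]
  exact h.congr_deriv (by rw [gaussianPDFReal_zero_one_neg]; ring)

lemma continuous_centralProb : Continuous centralProb :=
  continuous_iff_continuousAt.2 fun b => (hasDerivAt_centralProb b).continuousAt

lemma centralProb_zero : centralProb 0 = 0 := by simp [centralProb]

lemma centralProb_pos {b : ℝ} (hb : 0 < b) : 0 < centralProb b :=
  intervalIntegral.intervalIntegral_pos_of_pos_on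
    (continuous_gaussianPDFReal_zero_one.intervalIntegrable _ _)
    (fun x _ => gaussianPDFReal_pos 0 1 x one_ne_zero) (by linarith)

lemma centralProb_eq_measureReal {b : ℝ} (hb : 0 ≤ b) :
    centralProb b = Measure.real stdGaussian (Ioo (-b) b) := by
  rw [measureReal_def, _root_.stdGaussian, gaussianReal_apply_eq_integral 0 one_ne_zero,
    ENNReal.toReal_ofReal (setIntegral_nonneg measurableSet_Ioo
      fun x _ => gaussianPDFReal_nonneg 0 1 x),
    centralProb, intervalIntegral.integral_of_le (by linarith), integral_Ioc_eq_integral_Ioo]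

instance : IsProbabilityMeasure (stdGaussian : Measure ℝ) := by
  unfold _root_.stdGaussian
  infer_instance

lemma centralProb_le_one {b : ℝ} (hb : 0 ≤ b) : centralProb b ≤ 1 := by
  rw [centralProb_eq_measureReal hb]
  exact measureReal_le_one

lemma hasDerivAt_truncSecondMoment (b : ℝ) :
    HasDerivAt truncSecondMoment (2 * b ^ 2 * φ b) b := by
  have h := (hasDerivAt_centralProb b).sub
    (((hasDerivAt_id b).const_mul 2).mul (hasDerivAt_gaussianPDFReal_zero_one b))
  exact h.congr_deriv (by simp only [id_eq]; ring)

lemma truncSecondMoment_pos {b : ℝ} (hb : 0 < b) : 0 < truncSecondMoment b := by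
  have hmono : StrictMonoOn truncSecondMoment (Ici 0) := by
    refine strictMonoOn_of_deriv_pos (convex_Ici 0)
      (fun x _ => (hasDerivAt_truncSecondMoment x).continuousAt.continuousWithinAt) ?_
    intro x hx
    rw [interior_Ici, mem_Ioi] at hx
    rw [(hasDerivAt_truncSecondMoment x).deriv]
    have := gaussianPDFReal_pos 0 1 x one_ne_zero
    positivity
  simpa [truncSecondMoment, centralProb_zero] using hmono self_mem_Ici hb.le hb

lemma integral_sq_mul_gaussianPDFReal (b : ℝ) :
    ∫ x in -b..b, x ^ 2 * φ x = truncSecondMoment b := by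
  have h := intervalIntegral.integral_mul_deriv_eq_deriv_mul (a := -b) (b := b)
    (u := id) (u' := fun _ => 1) (v := fun x => -φ x) (v' := fun x => x * φ x)
    (fun x _ => hasDerivAt_id x)
    (fun x _ => (hasDerivAt_gaussianPDFReal_zero_one x).neg.congr_deriv (by ring))
    intervalIntegrable_const
    ((continuous_id.mul continuous_gaussianPDFReal_zero_one).intervalIntegrable _ _)
  simp only [id_eq, one_mul, intervalIntegral.integral_neg, gaussianPDFReal_zero_one_neg] at h
  rw [truncSecondMoment, centralProb]
  simp only [pow_two, mul_assoc, h]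
  ring

lemma hasDerivAt_clipSecondMoment (b : ℝ) :
    HasDerivAt clipSecondMoment (2 * b * (1 - centralProb b)) b := by
  have h := (hasDerivAt_truncSecondMoment b).add
    ((hasDerivAt_pow 2 b).mul ((hasDerivAt_const b 1).sub (hasDerivAt_centralProb b)))
  exact h.congr_deriv (by simp only [Nat.cast_ofNat, Pi.sub_apply]; ring)

lemma continuous_clipSecondMoment : Continuous clipSecondMoment :=
  continuous_iff_continuousAt.2 fun b => (hasDerivAt_clipSecondMoment b).continuousAt

lemma clipSecondMoment_zero : clipSecondMoment 0 = 0 := by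
  simp [clipSecondMoment, truncSecondMoment, centralProb_zero]

lemma setIntegral_stdGaussian_Ioo (f : ℝ → ℝ) {b : ℝ} (hb : 0 ≤ b) :
    ∫ z in Ioo (-b) b, f z ∂stdGaussian = ∫ x in -b..b, φ x * f x := by
  rw [_root_.stdGaussian, gaussianReal_of_var_ne_zero 0 one_ne_zero,
    setIntegral_withDensity_eq_setIntegral_toReal_smul (measurable_gaussianPDF 0 1)
      (ae_of_all _ fun _ => gaussianPDF_lt_top) f measurableSet_Ioo,
    intervalIntegral.integral_of_le (by linarith), integral_Ioc_eq_integral_Ioo]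
  simp only [toReal_gaussianPDF, smul_eq_mul]

lemma integrable_min_sq (b : ℝ) :
    Integrable (fun z : ℝ => min (b ^ 2) (z ^ 2)) stdGaussian := by
  refine Integrable.mono' (integrable_const (b ^ 2)) (by fun_prop) (ae_of_all _ fun z => ?_)
  rw [Real.norm_of_nonneg (by positivity)]
  exact min_le_left _ _

lemma integral_min_sq {b : ℝ} (hb : 0 ≤ b) :
    ∫ z, min (b ^ 2) (z ^ 2) ∂stdGaussian = clipSecondMoment b := by
  have hin : ∫ z in Ioo (-b) b, min (b ^ 2) (z ^ 2) ∂stdGaussian = truncSecondMoment b := by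
    rw [setIntegral_congr_fun measurableSet_Ioo
        fun z hz => min_eq_right (sq_le_sq' hz.1.le hz.2.le),
      setIntegral_stdGaussian_Ioo _ hb, ← integral_sq_mul_gaussianPDFReal]
    simp only [mul_comm]
  have hout : ∫ z in (Ioo (-b) b)ᶜ, min (b ^ 2) (z ^ 2) ∂stdGaussian
      = b ^ 2 * (1 - centralProb b) := by
    rw [setIntegral_congr_fun measurableSet_Ioo.compl fun z hz => min_eq_left ?_,
      setIntegral_const, probReal_compl_eq_one_sub measurableSet_Ioo,
      ← centralProb_eq_measureReal hb, smul_eq_mul, mul_comm]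
    simp only [mem_compl_iff, mem_Ioo, not_and_or, not_lt] at hz
    rcases hz with hz | hz <;> nlinarith
  rw [← integral_add_compl measurableSet_Ioo (integrable_min_sq b), hin, hout, clipSecondMoment]

lemma clipSecondMoment_nonneg {b : ℝ} (hb : 0 ≤ b) : 0 ≤ clipSecondMoment b := by
  rw [← integral_min_sq hb]
  exact integral_nonneg fun z => by positivity

lemma monotoneOn_clipSecondMoment : MonotoneOn clipSecondMoment (Ici 0) := by
  intro b hb b' hb' hbb'
  rw [← integral_min_sq hb, ← integral_min_sq hb']
  exact integral_mono (integrable_min_sq b) (integrable_min_sq b') fun z =>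
    min_le_min_right _ (pow_le_pow_left₀ hb hbb' 2)

lemma sq_max_neg_min {a : ℝ} (ha : 0 ≤ a) (y : ℝ) :
    max (-a) (min a y) ^ 2 = min (a ^ 2) (y ^ 2) := by
  rcases le_total y (-a) with h | h
  · rw [min_eq_right (by linarith), max_eq_left h, min_eq_left (by nlinarith), neg_sq]
  rcases le_total a y with h2 | h2
  · rw [min_eq_left h2, max_eq_right (by linarith), min_eq_left (by nlinarith)]
  · rw [min_eq_right h2, max_eq_right h, min_eq_right (by nlinarith)]

lemma integral_eta_sq {a γ t : ℝ} (ha : 0 ≤ a) (hγ : 0 < 1 + γ) (ht : 0 < t) :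
    ∫ z, eta a γ (√t * z) ^ 2 ∂stdGaussian
      = t / (1 + γ) ^ 2 * clipSecondMoment (a * (1 + γ) / √t) := by
  have hs : 0 < √t := sqrt_pos.2 ht
  have hst : √t ^ 2 = t := sq_sqrt ht.le
  have hpt : ∀ z, eta a γ (√t * z) ^ 2
      = t / (1 + γ) ^ 2 * min ((a * (1 + γ) / √t) ^ 2) (z ^ 2) := by
    intro z
    rw [eta, sq_max_neg_min ha, mul_min_of_nonneg _ _ (by positivity)]
    congr 1
    · field_simp
      rw [hst]
    · field_simp
      rw [hst, mul_comm]
  simp only [hpt]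
  rw [integral_const_mul, integral_min_sq (by positivity)]

lemma integral_eta' {a γ t : ℝ} (ha : 0 ≤ a) (hγ : 0 < 1 + γ) (ht : 0 < t) :
    ∫ z, eta' a γ (√t * z) ∂stdGaussian
      = centralProb (a * (1 + γ) / √t) / (1 + γ) := by
  have hs : 0 < √t := sqrt_pos.2 ht
  set b := a * (1 + γ) / √t
  have hmem : ∀ z, |√t * z| < a * (1 + γ) ↔ z ∈ Ioo (-b) b := fun z => by
    rw [abs_mul, abs_of_pos hs, mul_comm, ← lt_div_iff₀ hs, abs_lt, mem_Ioo]
  have hpt : ∀ z, eta' a γ (√t * z) = (Ioo (-b) b).indicator (fun _ => 1 / (1 + γ)) z := by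
    intro z
    simp only [eta', indicator_apply, hmem]
  simp only [hpt]
  rw [integral_indicator_const _ measurableSet_Ioo, smul_eq_mul,
    ← centralProb_eq_measureReal (by positivity)]
  ring

/-- The value of `1 + γ` forced by the first fixed-point equation once the normalised
threshold `b = a (1 + γ) / τ` is given. -/
def onePlusGammaOf (a r b : ℝ) : ℝ := √(b ^ 2 / a ^ 2 + r * clipSecondMoment b)

/-- The value of `ρ` given by the second fixed-point equation at the threshold `b`. -/
def rhoOf (a r b : ℝ) : ℝ :=
  (onePlusGammaOf a r b - 1) * (onePlusGammaOf a r b - r * centralProb b) / onePlusGammaOf a r b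

section Threshold

variable {a r : ℝ}

lemma sq_onePlusGammaOf (hr : 0 ≤ r) {b : ℝ} (hb : 0 ≤ b) :
    onePlusGammaOf a r b ^ 2 = b ^ 2 / a ^ 2 + r * clipSecondMoment b :=
  sq_sqrt (add_nonneg (by positivity) (mul_nonneg hr (clipSecondMoment_nonneg hb)))

lemma onePlusGammaOf_zero : onePlusGammaOf a r 0 = 0 := by
  simp [onePlusGammaOf, clipSecondMoment_zero]

lemma onePlusGammaOf_pos (ha : a ≠ 0) (hr : 0 ≤ r) {b : ℝ} (hb : 0 < b) :
    0 < onePlusGammaOf a r b :=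
  sqrt_pos.2 (add_pos_of_pos_of_nonneg (by positivity)
    (mul_nonneg hr (clipSecondMoment_nonneg hb.le)))

lemma div_le_onePlusGammaOf (ha : 0 ≤ a) (hr : 0 ≤ r) {b : ℝ} (hb : 0 ≤ b) :
    b / a ≤ onePlusGammaOf a r b := by
  rw [← sqrt_sq (div_nonneg hb ha), div_pow]
  exact sqrt_le_sqrt (le_add_of_nonneg_right (mul_nonneg hr (clipSecondMoment_nonneg hb)))

lemma strictMonoOn_onePlusGammaOf (ha : a ≠ 0) (hr : 0 ≤ r) :
    StrictMonoOn (onePlusGammaOf a r) (Ici 0) := by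
  intro b hb b' hb' hbb'
  have hsq : b ^ 2 / a ^ 2 < b' ^ 2 / a ^ 2 := by gcongr
  have hm : r * clipSecondMoment b ≤ r * clipSecondMoment b' :=
    mul_le_mul_of_nonneg_left (monotoneOn_clipSecondMoment hb hb' hbb'.le) hr
  exact sqrt_lt_sqrt (add_nonneg (by positivity) (mul_nonneg hr (clipSecondMoment_nonneg hb)))
    (add_lt_add_of_lt_of_le hsq hm)

lemma continuous_onePlusGammaOf : Continuous (onePlusGammaOf a r) := by
  unfold onePlusGammaOf
  have := continuous_clipSecondMoment
  fun_prop

lemma hasDerivAt_onePlusGammaOf (ha : a ≠ 0) (hr : 0 ≤ r) {b : ℝ} (hb : 0 < b) :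
    HasDerivAt (onePlusGammaOf a r)
      ((b / a ^ 2 + r * b * (1 - centralProb b)) / onePlusGammaOf a r b) b := by
  have hin : HasDerivAt (fun y => y ^ 2 / a ^ 2 + r * clipSecondMoment y)
      (2 * b / a ^ 2 + r * (2 * b * (1 - centralProb b))) b :=
    (((hasDerivAt_pow 2 b).div_const (a ^ 2)).add
      ((hasDerivAt_clipSecondMoment b).const_mul r)).congr_deriv (by simp)
  have hpos := onePlusGammaOf_pos ha hr hb
  unfold onePlusGammaOf at hpos ⊢
  refine (hin.sqrt (sqrt_pos.1 hpos).ne').congr_deriv ?_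
  field_simp

lemma continuousOn_rhoOf (ha : a ≠ 0) (hr : 0 ≤ r) : ContinuousOn (rhoOf a r) (Ioi 0) := by
  have hu := continuous_onePlusGammaOf (a := a) (r := r)
  have hq := continuous_centralProb
  exact ContinuousOn.div (by fun_prop) (by fun_prop) fun b hb =>
    (onePlusGammaOf_pos ha hr hb).ne'

/-- The positivity rests on `truncSecondMoment b = centralProb b - 2 b φ(b) > 0`. -/
lemma exists_hasDerivAt_rhoOf_pos (ha : a ≠ 0) (hr : 0 ≤ r) {b : ℝ} (hb : 0 < b)
    (hreg : r * centralProb b < onePlusGammaOf a r b) :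
    ∃ F', HasDerivAt (rhoOf a r) F' b ∧ 0 < F' := by
  have hU' := hasDerivAt_onePlusGammaOf ha hr hb
  have h := ((hU'.sub_const 1).mul (hU'.sub ((hasDerivAt_centralProb b).const_mul r))).div
    hU' (onePlusGammaOf_pos ha hr hb).ne'
  simp only [Pi.mul_apply, Pi.sub_apply] at h
  set U := onePlusGammaOf a r b
  set Q := centralProb b
  set P := φ b
  have hU : 0 < U := onePlusGammaOf_pos ha hr hb
  have hQ : 0 < Q := centralProb_pos hb
  have hP : 0 < P := gaussianPDFReal_pos 0 1 b one_ne_zero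
  have hE : 0 < Q - 2 * b * P := truncSecondMoment_pos hb
  have hU2 : b ^ 2 / a ^ 2 = U ^ 2 - r * (Q - 2 * b * P + b ^ 2 * (1 - Q)) := by
    rw [sq_onePlusGammaOf hr hb.le, clipSecondMoment, truncSecondMoment]
    ring
  set N := (b / a ^ 2 + r * b * (1 - Q)) * (U ^ 2 - r * Q) - 2 * r * P * U ^ 2 * (U - 1)
  have hN : N * (b * Q)
      = (Q - 2 * b * P) * (U ^ 2 - r * Q) ^ 2 + 2 * b * P * U ^ 3 * (U - r * Q) := by
    have : b / a ^ 2 * b = b ^ 2 / a ^ 2 := by ring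
    linear_combination (Q * (U ^ 2 - r * Q)) * hU2 + (Q * (U ^ 2 - r * Q)) * this
  have hNpos : 0 < N := by
    refine pos_of_mul_pos_left (hN ▸ ?_) (by positivity : 0 ≤ b * Q)
    have : 0 < U - r * Q := by linarith
    positivity
  refine ⟨N / U ^ 3, h.congr_deriv ?_, by positivity⟩
  simp only [N]
  field_simp
  ring

lemma strictMonoOn_rhoOf (ha : a ≠ 0) (hr : 0 ≤ r) {b₁ b₂ : ℝ} (hb₁ : 0 < b₁)
    (hu₁ : 1 < onePlusGammaOf a r b₁) (hρ₁ : 0 < rhoOf a r b₁) :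
    StrictMonoOn (rhoOf a r) (Icc b₁ b₂) := by
  refine strictMonoOn_Icc_of_hasDerivAt_pos_of_lt
    ((continuousOn_rhoOf ha hr).mono fun z hz => hb₁.trans_le hz.1) ?_ hρ₁
  intro z hz hρz
  have hz0 : 0 < z := hb₁.trans_le hz.1
  have hu : 1 < onePlusGammaOf a r z :=
    hu₁.trans_le ((strictMonoOn_onePlusGammaOf ha hr).monotoneOn hb₁.le hz0.le hz.1)
  refine exists_hasDerivAt_rhoOf_pos ha hr hz0 ?_
  rw [rhoOf, div_pos_iff_of_pos_right (by linarith)] at hρz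
  linarith [pos_of_mul_pos_right hρz (by linarith)]

lemma injOn_rhoOf (ha : a ≠ 0) (hr : 0 ≤ r) :
    InjOn (rhoOf a r) {b | 0 < b ∧ 1 < onePlusGammaOf a r b ∧ 0 < rhoOf a r b} := by
  have key : ∀ b₁ ∈ {b | 0 < b ∧ 1 < onePlusGammaOf a r b ∧ 0 < rhoOf a r b}, ∀ b₂,
      b₁ < b₂ → rhoOf a r b₁ ≠ rhoOf a r b₂ := fun b₁ ⟨hb₁, hu₁, hρ₁⟩ b₂ h =>
    (strictMonoOn_rhoOf ha hr hb₁ hu₁ hρ₁ ⟨le_rfl, h.le⟩ ⟨h.le, le_rfl⟩ h).ne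
  intro b₁ h₁ b₂ h₂ heq
  rcases lt_trichotomy b₁ b₂ with h | h | h
  · exact absurd heq (key b₁ h₁ b₂ h)
  · exact h
  · exact absurd heq.symm (key b₂ h₂ b₁ h)

lemma exists_rhoOf_eq (ha : 0 < a) (hr : 0 ≤ r) {ρ : ℝ} (hρ : 0 < ρ) :
    ∃ b, 0 < b ∧ 1 < onePlusGammaOf a r b ∧ rhoOf a r b = ρ := by
  have hmono := strictMonoOn_onePlusGammaOf ha.ne' hr
  obtain ⟨b₁, hb₁, hu₁⟩ : ∃ b₁ ∈ Icc 0 (2 * a), onePlusGammaOf a r b₁ = 1 := by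
    refine intermediate_value_Icc (by positivity) continuous_onePlusGammaOf.continuousOn
      ⟨by rw [onePlusGammaOf_zero]; exact zero_le_one, ?_⟩
    have := div_le_onePlusGammaOf ha.le hr (by positivity : 0 ≤ 2 * a)
    rw [mul_div_assoc, div_self ha.ne'] at this
    linarith
  have hb₁0 : 0 < b₁ := lt_of_le_of_ne hb₁.1 fun h => by
    rw [← h, onePlusGammaOf_zero] at hu₁
    exact zero_ne_one hu₁
  set B := a * (r + ρ + 2)
  have hb₁B : b₁ ≤ B := hb₁.2.trans (by nlinarith)
  have hρB : ρ ≤ rhoOf a r B := by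
    have huB : r + ρ + 2 ≤ onePlusGammaOf a r B := by
      simpa [B, ha.ne'] using div_le_onePlusGammaOf ha.le hr (by positivity : 0 ≤ B)
    have hq := centralProb_le_one (by positivity : 0 ≤ B)
    rw [rhoOf, le_div_iff₀ (by linarith)]
    nlinarith [mul_le_mul_of_nonneg_left hq hr]
  obtain ⟨b, hb, hρb⟩ := intermediate_value_Icc hb₁B
    ((continuousOn_rhoOf ha.ne' hr).mono fun z hz => hb₁0.trans_le hz.1)
    ⟨by simp [rhoOf, hu₁, hρ.le], hρB⟩
  have hb₁b : b₁ < b := lt_of_le_of_ne hb.1 fun h => by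
    rw [← h, rhoOf, hu₁, sub_self, zero_mul, zero_div] at hρb
    exact hρ.ne hρb
  exact ⟨b, hb₁0.trans hb₁b, hu₁ ▸ hmono hb₁0.le (hb₁0.trans hb₁b).le hb₁b, hρb⟩

end Threshold

lemma isSEFixedPoint_zero_iff {δ ρ : ℝ} (hρ : 0 < ρ) {p : ℝ × ℝ} :
    IsSEFixedPoint δ ρ 0 p ↔ p = (1, ρ) := by
  have heta : ∀ γ x, eta 0 γ x = 0 := fun γ x => by simp [eta]
  have heta' : ∀ γ x, eta' 0 γ x = 0 := fun γ x => by simp [eta', not_lt.2 (abs_nonneg x)]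
  obtain ⟨t, γ⟩ := p
  simp only [IsSEFixedPoint, heta, heta', Prod.mk.injEq]
  constructor
  · rintro ⟨-, -, ht, hγ⟩
    simp_all
  · rintro ⟨rfl, rfl⟩
    simp [hρ]

def seFixedPointOf (a r b : ℝ) : ℝ × ℝ :=
  ((a * onePlusGammaOf a r b / b) ^ 2, onePlusGammaOf a r b - 1)

lemma exists_eq_seFixedPointOf {δ ρ a : ℝ} (ha : 0 < a) {p : ℝ × ℝ}
    (hp : IsSEFixedPoint δ ρ a p) :
    ∃ b, 0 < b ∧ 1 < onePlusGammaOf a δ⁻¹ b ∧ rhoOf a δ⁻¹ b = ρ ∧ p = seFixedPointOf a δ⁻¹ b := by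
  obtain ⟨t, γ⟩ := p
  obtain ⟨ht1, hγ, h1, h2⟩ := hp
  simp only at ht1 hγ h1 h2
  generalize δ⁻¹ = r at h1 h2 ⊢
  have ht : 0 < t := zero_lt_one.trans_le ht1
  have hu : 0 < 1 + γ := by linarith
  rw [integral_eta_sq ha.le hu ht] at h1
  rw [integral_eta' ha.le hu ht] at h2
  set b := a * (1 + γ) / √t
  have hbsq : b ^ 2 = a ^ 2 * (1 + γ) ^ 2 / t := by
    rw [div_pow, mul_pow, sq_sqrt ht.le]
  have hU : onePlusGammaOf a r b = 1 + γ := by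
    rw [onePlusGammaOf, ← sqrt_sq hu.le, hbsq]
    congr 1
    field_simp at h1 ⊢
    exact h1.symm
  refine ⟨b, by positivity, by linarith, ?_, ?_⟩
  · rw [rhoOf, hU, h2]
    field_simp
    ring
  · rw [seFixedPointOf, hU, Prod.mk.injEq, div_pow, hbsq]
    constructor
    · field_simp
    · ring

lemma isSEFixedPoint_seFixedPointOf {δ ρ a b : ℝ} (hδ : 0 ≤ δ) (ha : 0 < a) (hb : 0 < b)
    (hu : 1 < onePlusGammaOf a δ⁻¹ b) (hρ : rhoOf a δ⁻¹ b = ρ) :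
    IsSEFixedPoint δ ρ a (seFixedPointOf a δ⁻¹ b) := by
  have hr : 0 ≤ δ⁻¹ := inv_nonneg.2 hδ
  unfold IsSEFixedPoint seFixedPointOf
  rw [rhoOf] at hρ
  generalize δ⁻¹ = r at hr hu hρ ⊢
  have hU2 := sq_onePlusGammaOf (a := a) hr hb.le
  have hm := clipSecondMoment_nonneg hb.le
  set U := onePlusGammaOf a r b
  have ht : 0 < (a * U / b) ^ 2 := by positivity
  have hthr : a * (1 + (U - 1)) / √((a * U / b) ^ 2) = b := by
    rw [sqrt_sq (by positivity), add_sub_cancel]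
    field_simp
  rw [integral_eta_sq ha.le (by linarith) ht, integral_eta' ha.le (by linarith) ht, hthr,
    add_sub_cancel]
  refine ⟨?_, by linarith, ?_, ?_⟩
  · rw [div_pow, le_div_iff₀ (by positivity), mul_pow, hU2]
    field_simp
    nlinarith [mul_nonneg hr hm]
  · rw [div_pow, mul_pow, hU2]
    field_simp
  · rw [← hρ]
    field_simp

/-- Lemma 1. For `δ > 0`, `ρ > 0` and `a ≥ 0`, there exists a unique pair
`(τ², γ)` with `τ² ≥ 1` and `γ > 0` satisfying the state-evolution fixed-point equations
`τ² = 1 + δ⁻¹ E[η_a(τZ; γ)²]` and `ρ = γ (1 − δ⁻¹ E[η_a'(τZ; γ)])`. -/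
theorem se_fixed_point_exists_unique (δ ρ a : ℝ) (hδ : 0 < δ) (hρ : 0 < ρ) (ha : 0 ≤ a) :
    ∃! p : ℝ × ℝ, IsSEFixedPoint δ ρ a p := by
  rcases ha.eq_or_lt with rfl | ha
  · exact ⟨(1, ρ), (isSEFixedPoint_zero_iff hρ).2 rfl,
      fun p hp => (isSEFixedPoint_zero_iff hρ).1 hp⟩
  have hr : 0 ≤ δ⁻¹ := inv_nonneg.2 hδ.le
  obtain ⟨b, hb, hu, hρb⟩ := exists_rhoOf_eq ha hr hρ
  refine ⟨_, isSEFixedPoint_seFixedPointOf hδ.le ha hb hu hρb, fun p hp => ?_⟩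
  obtain ⟨b', hb', hu', hρb', rfl⟩ := exists_eq_seFixedPointOf ha hp
  obtain rfl : b' = b :=
    injOn_rhoOf ha.ne' hr ⟨hb', hu', hρb' ▸ hρ⟩ ⟨hb, hu, hρb ▸ hρ⟩ (hρb'.trans hρb.symm)
  rfl
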